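/- Let d ≥ 2, let A ⊆ ℝ^d be closed, connected and unbounded, and let B be an unbounded connected component of ℝ^d \ A. Then the set (closure of B) \ B is connected, unbounded, and contained in the frontier ∂A of A. -/

import Mathlib

/-!
`closure B \ B` lies in `A` because `B` is open and closed in `Aᶜ`. It is unbounded because the
complement of a ball is connected when `d ≥ 2`: a boundary inside a ball would force `B` or
`Bᶜ ⊇ A` to be bounded. For connectedness, `closure B` and `Bᶜ` are closed connected sets covering
`ℝ^d` (`Bᶜ` is `A` together with the closures of the other components, each of which touches `A`),
and `ℝ^d` is unicoherent: if `F ∩ G` splits into closed pieces `P` and `Q`, an Urysohn function `u`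
separating them gives a circle-valued map equal to `exp (iπu)` on `F` and to `exp (-iπu)` on `G`.
It lifts to `ℝ` since `ℝ^d` is simply connected, and comparing the lift with `πu` on `F` and with
`-πu` on `G` between a point of `P` and a point of `Q` gives `π = -π`.
-/

open Bornology

open Set Metric Real

section Unicoherence

variable {X : Type*} [TopologicalSpace X]

theorem exists_circleExp_lift [SimplyConnectedSpace X] [LocallyPathConnectedSpace X]
    (f : C(X, Circle)) : ∃ g : C(X, ℝ), ∀ x, Circle.exp (g x) = f x := by
  obtain ⟨x₀⟩ : Nonempty X := inferInstance
  obtain ⟨e₀, he₀⟩ := Circle.exp_surjective (f x₀)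
  obtain ⟨g, ⟨-, hg⟩, -⟩ := Circle.isCoveringMap_exp.existsUnique_continuousMap_lifts f x₀ e₀ he₀
  exact ⟨g, congrFun hg⟩

theorem IsPreconnected.sub_eq_sub_of_circleExp_eq {S : Set X} (hS : IsPreconnected S)
    {g h : X → ℝ} (hg : ContinuousOn g S) (hh : ContinuousOn h S)
    (hgh : ∀ z ∈ S, Circle.exp (g z) = Circle.exp (h z)) {x y : X} (hx : x ∈ S) (hy : y ∈ S) :
    g x - h x = g y - h y :=
  hS.constant_of_mapsTo
    (isDiscrete_iff_discreteTopology.2 (Circle.isCoveringMap_exp 1).discreteTopology_fiber)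
    (hg.sub hh) (fun z hz => by simp [Circle.exp_sub, hgh z hz]) hx hy

theorem isPreconnected_inter_of_union_eq_univ [NormalSpace X] [SimplyConnectedSpace X]
    [LocallyPathConnectedSpace X] {F G : Set X} (hF : IsClosed F) (hG : IsClosed G)
    (hFc : IsPreconnected F) (hGc : IsPreconnected G) (hFG : F ∪ G = univ) :
    IsPreconnected (F ∩ G) := by
  classical
  rw [isPreconnected_closed_iff]
  rintro P Q hP hQ hPQ ⟨p, hpFG, hpP⟩ ⟨q, hqFG, hqQ⟩
  by_contra hdisj
  have hdisj' : Disjoint (F ∩ G ∩ P) (F ∩ G ∩ Q) :=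
    Set.disjoint_left.2 fun z ⟨hz, hzP⟩ ⟨_, hzQ⟩ => hdisj ⟨z, hz, hzP, hzQ⟩
  obtain ⟨u, hu0, hu1, -⟩ := exists_continuous_zero_one_of_isClosed
    ((hF.inter hG).inter hP) ((hF.inter hG).inter hQ) hdisj'
  have hflip : ∀ z ∈ F ∩ G, Circle.exp (π * u z) = Circle.exp (-(π * u z)) := by
    intro z hz
    rcases hPQ hz with hzP | hzQ
    · simp [hu0 ⟨hz, hzP⟩]
    · rw [hu1 ⟨hz, hzQ⟩, Circle.exp_eq_exp]
      exact ⟨1, by simp only [Pi.one_apply, Int.cast_one]; ring⟩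
  have hfrontier : frontier F ⊆ F ∩ G := fun z hz =>
    ⟨hF.frontier_subset hz, closure_minimal (compl_subset_iff_union.2 hFG) hG
      (frontier_eq_closure_inter_closure.subset hz).2⟩
  let f : C(X, Circle) :=
    ⟨fun z => if z ∈ F then Circle.exp (π * u z) else Circle.exp (-(π * u z)),
      Continuous.if (fun z hz => hflip z (hfrontier hz)) (by fun_prop) (by fun_prop)⟩
  obtain ⟨g, hg⟩ := exists_circleExp_lift f
  have hFg := hFc.sub_eq_sub_of_circleExp_eq (h := fun z => π * u z)
    g.continuous.continuousOn (by fun_prop) (fun z hz => by simp [hg, f, hz])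
    hpFG.1 hqFG.1
  have hGg := hGc.sub_eq_sub_of_circleExp_eq (h := fun z => -(π * u z))
    g.continuous.continuousOn (by fun_prop)
    (fun z hz => by
      by_cases hzF : z ∈ F
      · simpa [hg, f, hzF] using hflip z ⟨hzF, hz⟩
      · simp [hg, f, hzF])
    hpFG.2 hqFG.2
  simp only [hu0 ⟨hpFG, hpP⟩, hu1 ⟨hqFG, hqQ⟩, Pi.zero_apply, Pi.one_apply] at hFg hGg
  linarith [pi_pos]

end Unicoherence

section ComplementOfBall

variable {E : Type*} [NormedAddCommGroup E] [NormedSpace ℝ E]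

theorem isPreconnected_compl_closedBall (hE : 1 < Module.rank ℝ E) (r : ℝ) :
    IsPreconnected (closedBall (0 : E) r)ᶜ := by
  have hsphere := isConnected_sphere hE (0 : E) zero_le_one
  convert (hsphere.isPreconnected.prod (isPreconnected_Ioi (a := r))).image (fun p => p.2 • p.1) (by fun_prop)
  ext y
  simp only [mem_compl_iff, mem_closedBall_zero_iff, not_le, mem_image, mem_prod,
    mem_sphere_zero_iff_norm, mem_Ioi, Prod.exists]
  constructor
  · intro hy
    rcases eq_or_ne y 0 with rfl | hy0
    · obtain ⟨u, hu⟩ := hsphere.nonempty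
      exact ⟨u, 0, ⟨by simpa using hu, by simpa using hy⟩, zero_smul _ _⟩
    · exact ⟨‖y‖⁻¹ • y, ‖y‖, ⟨by simp [norm_smul, hy0], hy⟩, by simp [smul_smul, hy0]⟩
  · rintro ⟨u, t, ⟨hu, ht⟩, rfl⟩
    rw [norm_smul, hu, mul_one]
    exact ht.trans_le (le_abs_self t)

theorem not_isBounded_frontier (hE : 1 < Module.rank ℝ E) {s : Set E} (hs : ¬IsBounded s)
    (hsc : ¬IsBounded sᶜ) : ¬IsBounded (frontier s) := by
  intro hfr
  obtain ⟨r, hr⟩ := (isBounded_iff_subset_closedBall 0).1 hfr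
  have hcover : (closedBall (0 : E) r)ᶜ ⊆ interior s ∪ (closure s)ᶜ := fun z hz => by
    by_contra h
    simp only [mem_union, mem_compl_iff, not_or, not_not] at h
    exact hz (hr ⟨h.2, h.1⟩)
  rcases (isPreconnected_compl_closedBall hE r).subset_or_subset isOpen_interior
      isClosed_closure.isOpen_compl (disjoint_compl_right.mono_left interior_subset_closure)
      hcover with h | h
  · exact hsc (isBounded_closedBall.subset (compl_subset_comm.1 (h.trans interior_subset)))
  · exact hs (isBounded_closedBall.subset (subset_closure.trans (compl_subset_compl.1 h)))

end ComplementOfBall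

section Components

variable {X : Type*} [TopologicalSpace X] [LocallyConnectedSpace X]

theorem IsOpen.closure_connectedComponentIn_diff_subset {U : Set X} (hU : IsOpen U) (x : X) :
    closure (connectedComponentIn U x) \ connectedComponentIn U x ⊆ Uᶜ := by
  rintro y ⟨hyc, hyC⟩ hyU
  obtain ⟨z, hzy, hzx⟩ := mem_closure_iff_nhds.1 hyc _
    (hU.connectedComponentIn.mem_nhds (mem_connectedComponentIn hyU))
  rw [connectedComponentIn_eq hzx, ← connectedComponentIn_eq hzy] at hyC
  exact hyC (mem_connectedComponentIn hyU)

theorem IsConnected.isPreconnected_compl_connectedComponentIn_compl [PreconnectedSpace X]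
    {A : Set X} (hA : IsConnected A) (hAcl : IsClosed A) (x : X) :
    IsPreconnected (connectedComponentIn Aᶜ x)ᶜ := by
  obtain ⟨a, ha⟩ := hA.nonempty
  have hopen := hAcl.isOpen_compl
  set B := connectedComponentIn Aᶜ x
  have hpiece : ∀ y, IsPreconnected (A ∪ closure (connectedComponentIn Aᶜ y)) := by
    intro y
    rcases (connectedComponentIn Aᶜ y).eq_empty_or_nonempty with h | h
    · simpa [h] using hA.isPreconnected
    obtain ⟨z, hz⟩ := nonempty_frontier_iff.2
      ⟨h, fun huniv => (connectedComponentIn_subset _ _ (huniv ▸ mem_univ a) : a ∈ Aᶜ) ha⟩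
    rw [hopen.connectedComponentIn.frontier_eq] at hz
    have hzA : z ∈ A := compl_compl A ▸ hopen.closure_connectedComponentIn_diff_subset y hz
    exact hA.isPreconnected.union z hzA hz.1 isPreconnected_connectedComponentIn.closure
  have hsub : ∀ y ∉ B, A ∪ closure (connectedComponentIn Aᶜ y) ⊆ Bᶜ := by
    intro y hy
    refine union_subset (fun z hz hzB => connectedComponentIn_subset _ _ hzB hz) ?_
    refine subset_compl_iff_disjoint_right.2 (Disjoint.closure_left ?_ hopen.connectedComponentIn)
    refine Set.disjoint_left.2 fun z hzy hzB => hy ?_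
    change y ∈ connectedComponentIn Aᶜ x
    rw [connectedComponentIn_eq hzB, ← connectedComponentIn_eq hzy]
    exact mem_connectedComponentIn (connectedComponentIn_nonempty_iff.1 ⟨z, hzy⟩)
  have hunion : Bᶜ = ⋃₀ ((fun y => A ∪ closure (connectedComponentIn Aᶜ y)) '' Bᶜ) := by
    refine Subset.antisymm (fun y hy => mem_sUnion_of_mem ?_ (mem_image_of_mem _ hy))
      (sUnion_subset (forall_mem_image.2 hsub))
    by_cases hyA : y ∈ A
    · exact Or.inl hyA
    · exact Or.inr (subset_closure (mem_connectedComponentIn hyA))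
  rw [hunion]
  exact isPreconnected_sUnion a _ (forall_mem_image.2 fun y _ => Or.inl ha)
    (forall_mem_image.2 fun y _ => hpiece y)

end Components

theorem closure_diff_self_connected_unbounded_general
    (d : ℕ) (hd : 2 ≤ d) (A B : Set (EuclideanSpace ℝ (Fin d)))
    (hAclosed : IsClosed A) (hAconn : IsConnected A) (hAunb : ¬ IsBounded A)
    (x : EuclideanSpace ℝ (Fin d))
    (hB : B = connectedComponentIn Aᶜ x) (hBunb : ¬ IsBounded B) :
    IsConnected (closure B \ B) ∧ ¬ IsBounded (closure B \ B) ∧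
      closure B \ B ⊆ frontier A := by
  have hrank : 1 < Module.rank ℝ (EuclideanSpace ℝ (Fin d)) := by
    rw [← Module.finrank_eq_rank, finrank_euclideanSpace_fin]
    exact_mod_cast hd
  have hBopen : IsOpen B := hB ▸ hAclosed.isOpen_compl.connectedComponentIn
  have hBA : B ⊆ Aᶜ := hB ▸ connectedComponentIn_subset _ _
  have hBdiff : closure B \ B ⊆ A := by
    simpa [hB] using hAclosed.isOpen_compl.closure_connectedComponentIn_diff_subset x
  have hunb : ¬IsBounded (closure B \ B) := hBopen.frontier_eq ▸
    not_isBounded_frontier hrank hBunb fun h => hAunb (h.subset (subset_compl_comm.1 hBA))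
  have hsub : closure B \ B ⊆ frontier A := by
    rw [frontier_eq_closure_inter_closure]
    exact fun y hy => ⟨subset_closure (hBdiff hy), closure_mono hBA hy.1⟩
  have hcover : closure B ∪ Bᶜ = univ :=
    univ_subset_iff.1 (union_compl_self B ▸ union_subset_union_left _ subset_closure)
  have hconn : IsPreconnected (closure B ∩ Bᶜ) := by
    subst hB
    exact isPreconnected_inter_of_union_eq_univ isClosed_closure hBopen.isClosed_compl
      isPreconnected_connectedComponentIn.closure
      (hAconn.isPreconnected_compl_connectedComponentIn_compl hAclosed x) hcover
  exact ⟨⟨nonempty_of_not_isBounded hunb, hconn⟩, hunb, hsub⟩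

/-- Let `A ⊆ ℝ^d` (`d ≥ 2`) be closed, connected and unbounded, and let `B` be an
unbounded connected component of `ℝ^d \ A`. Then `closure B \ B` is connected,
unbounded, and contained in the frontier of `A`. -/
theorem closure_diff_self_connected_unbounded
    (d : ℕ) (hd : 2 ≤ d) (A B : Set (EuclideanSpace ℝ (Fin d)))
    (hAclosed : IsClosed A) (hAconn : IsConnected A) (hAunb : ¬ IsBounded A)
    (x : EuclideanSpace ℝ (Fin d)) (hx : x ∈ Aᶜ)
    (hB : B = connectedComponentIn Aᶜ x) (hBunb : ¬ IsBounded B) :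
    IsConnected (closure B \ B) ∧ ¬ IsBounded (closure B \ B) ∧
      closure B \ B ⊆ frontier A :=
  closure_diff_self_connected_unbounded_general d hd A B hAclosed hAconn hAunb x hB hBunb
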